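/- arXiv:2207.14021 — 7 statements merged into one kernel-verified Lean document; each statement's English description precedes it below -/
import Mathlib

section
/- Let A be an abelian semigroup, M an abelian group, and f : A^n → M a symmetric function that is an additive homomorphism in each of its n variables. If p > n, then for any u_1, …, u_p ∈ A, the iterated difference Δ_{u_1} ⋯ Δ_{u_p} applied to the diagonalisation f* : A → M (defined by f*(a) = f(a, …, a)) is identically zero. -/
/-!
Write `f_{s,w}(a)` (`partialDiag f s w a`) for `f` at the point whose coordinates in `s` all
equal `a` and whose other coordinates are the fixed `w i`, so that `f* = f_{univ,w}`. Expanding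
`f_{s,w}(a + u)` by additivity in each coordinate of `s` shows that `Δ_u f_{s,w}` is a sum of
functions `f_{s \ t,w'}` with `t` a nonempty subset of `s`. Each difference thus strictly lowers
the number of coordinates depending on `a`, so `#s + 1` differences kill `f_{s,w}`.
-/

/-- The difference operator: `(deltaOp u f) a = f (a + u) - f a`. -/
def deltaOp {A M : Type*} [Add A] [Sub M] (u : A) (f : A → M) : A → M :=
  fun a => f (a + u) - f a

open Finset Function

section

variable {ι A M : Type*} [AddCommSemigroup A] [AddCommGroup M]

theorem deltaOp_sum {κ : Type*} (u : A) (s : Finset κ) (g : κ → A → M) :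
    deltaOp u (∑ k ∈ s, g k) = ∑ k ∈ s, deltaOp u (g k) := by
  funext a
  simp only [deltaOp, Finset.sum_apply, Finset.sum_sub_distrib]

theorem foldr_deltaOp_sum {κ : Type*} (L : List A) (s : Finset κ) (g : κ → A → M) :
    L.foldr deltaOp (∑ k ∈ s, g k) = ∑ k ∈ s, L.foldr deltaOp (g k) := by
  induction L with
  | nil => rfl
  | cons u L ih => simp only [List.foldr_cons, ih, deltaOp_sum]

variable [DecidableEq ι]

theorem map_piecewise_add_of_map_update_add (f : (ι → A) → M)
    (hadd : ∀ (i : ι) (x : ι → A) (a b : A),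
      f (update x i (a + b)) = f (update x i a) + f (update x i b))
    (x y : ι → A) (s : Finset ι) :
    f (s.piecewise (x + y) y) = ∑ t ∈ s.powerset, f (t.piecewise x y) := by
  induction s using Finset.induction_on generalizing y with
  | empty => simp
  | @insert i s hi ih =>
    have hx : update (s.piecewise (x + y) y) i (x i) =
        s.piecewise (x + update y i (x i)) (update y i (x i)) := by
      ext j
      by_cases hj : j = i
      · subst hj; simp [hi]
      · by_cases hjs : j ∈ s <;> simp [hj, hjs]
    have hy : update (s.piecewise (x + y) y) i (y i) = s.piecewise (x + y) y := by
      ext j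
      by_cases hj : j = i
      · subst hj; simp [hi]
      · simp [hj]
    rw [Finset.piecewise_insert, Pi.add_apply, hadd, hx, hy, Finset.sum_powerset_insert hi,
      ih, ih, add_comm]
    congr 1
    refine Finset.sum_congr rfl fun t ht => congrArg f ?_
    ext j
    by_cases hj : j = i
    · subst hj; simp [Finset.notMem_of_mem_powerset_of_notMem ht hi]
    · by_cases hjt : j ∈ t <;> simp [hj, hjt]

def partialDiag (f : (ι → A) → M) (s : Finset ι) (w : ι → A) : A → M :=
  fun a => f (s.piecewise (fun _ => a) w)

theorem deltaOp_partialDiag (f : (ι → A) → M)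
    (hadd : ∀ (i : ι) (x : ι → A) (a b : A),
      f (update x i (a + b)) = f (update x i a) + f (update x i b))
    (s : Finset ι) (w : ι → A) (u : A) :
    deltaOp u (partialDiag f s w) =
      ∑ t ∈ s.powerset.erase ∅, partialDiag f (s \ t) (t.piecewise (fun _ => u) w) := by
  funext a
  set y := s.piecewise (fun _ => a) w
  have hshift : s.piecewise (fun _ => a + u) w = s.piecewise ((fun _ => u) + y) y := by
    ext i
    by_cases hi : i ∈ s <;> simp [y, hi, add_comm]
  have hsplit : ∀ t : Finset ι,
      t.piecewise (fun _ => u) y = (s \ t).piecewise (fun _ => a) (t.piecewise (fun _ => u) w) := by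
    intro t
    ext i
    by_cases hit : i ∈ t
    · simp [hit]
    · by_cases his : i ∈ s <;> simp [y, hit, his]
  change f (s.piecewise (fun _ => a + u) w) - f y = _
  rw [hshift, map_piecewise_add_of_map_update_add f hadd,
    ← Finset.sum_erase_add _ _ (Finset.empty_mem_powerset s), Finset.piecewise_empty,
    add_sub_cancel_right, Finset.sum_apply]
  exact Finset.sum_congr rfl fun t _ => congrArg f (hsplit t)

theorem foldr_deltaOp_partialDiag_eq_zero (f : (ι → A) → M)
    (hadd : ∀ (i : ι) (x : ι → A) (a b : A),
      f (update x i (a + b)) = f (update x i a) + f (update x i b))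
    (L : List A) (s : Finset ι) (w : ι → A) (hL : #s < L.length) :
    L.foldr deltaOp (partialDiag f s w) = 0 := by
  induction L using List.reverseRecOn generalizing s w with
  | nil => simp at hL
  | append_singleton L u ih =>
    rw [List.foldr_append, List.foldr_cons, List.foldr_nil, deltaOp_partialDiag f hadd,
      foldr_deltaOp_sum]
    refine Finset.sum_eq_zero fun t ht => ih _ _ ?_
    have hts : s \ t ⊂ s :=
      Finset.sdiff_ssubset (Finset.mem_powerset.mp (Finset.mem_of_mem_erase ht))
        (Finset.nonempty_iff_ne_empty.mpr (Finset.ne_of_mem_erase ht))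
    have := Finset.card_lt_card hts
    simp only [List.length_append, List.length_singleton] at hL
    omega

end

theorem stmt2_general {A M : Type*} [AddCommSemigroup A] [AddCommGroup M]
    {n : ℕ} (f : (Fin n → A) → M)
    (hadd : ∀ (i : Fin n) (x : Fin n → A) (a b : A),
      f (Function.update x i (a + b)) = f (Function.update x i a) + f (Function.update x i b))
    {p : ℕ} (hp : n < p) (u : Fin p → A) :
    List.foldr deltaOp (fun a => f (fun _ => a)) (List.ofFn u) = 0 := by
  have hdiag : (fun a => f fun _ => a) =
      partialDiag f univ (fun _ => u ⟨0, n.zero_le.trans_lt hp⟩) := by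
    funext a
    simp [partialDiag]
  rw [hdiag]
  exact foldr_deltaOp_partialDiag_eq_zero f hadd _ _ _ (by simpa using hp)

theorem stmt2 {A M : Type*} [AddCommSemigroup A] [AddCommGroup M]
    {n : ℕ} (f : (Fin n → A) → M)
    (hsym : ∀ (σ : Equiv.Perm (Fin n)) (x : Fin n → A), f (x ∘ σ) = f x)
    (hadd : ∀ (i : Fin n) (x : Fin n → A) (a b : A),
      f (Function.update x i (a + b)) = f (Function.update x i a) + f (Function.update x i b))
    {p : ℕ} (hp : n < p) (u : Fin p → A) :
    List.foldr deltaOp (fun a => f (fun _ => a)) (List.ofFn u) = 0 :=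
  stmt2_general f hadd hp u
end

section
/- Let A be an abelian semigroup, M an abelian group, and f : A^n → M a symmetric function that is an additive homomorphism in each of its n variables. Then for any u_1, …, u_n ∈ A, the iterated difference Δ_{u_1} ⋯ Δ_{u_n} applied to the diagonalisation f* : A → M is the constant function with value n! · f(u_1, …, u_n). -/
section Aux

variable {A M : Type*} [AddCommSemigroup A] [AddCommGroup M] {n : ℕ}

/-- diagonal of `f` on coordinates in `S`, other coordinates frozen at `x`. -/
def diagS (f : (Fin n → A) → M) (S : Finset (Fin n)) (x : Fin n → A) : A → M :=
  fun a => f (fun i => if i ∈ S then a else x i)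

lemma expand (f : (Fin n → A) → M)
    (hadd : ∀ (i : Fin n) (x : Fin n → A) (a b : A),
      f (Function.update x i (a + b)) = f (Function.update x i a) + f (Function.update x i b))
    (S : Finset (Fin n)) :
    ∀ (x : Fin n → A) (a u : A),
      f (fun i => if i ∈ S then a + u else x i)
        = ∑ T ∈ S.powerset, f (fun i => if i ∈ T then u else if i ∈ S then a else x i) := by
  induction S using Finset.induction_on with
  | empty => intro x a u; simp
  | @insert j S hj ih =>
    intro x a u
    have h1 : (fun i => if i ∈ insert j S then a + u else x i)
        = Function.update (fun i => if i ∈ S then a + u else x i) j (a + u) := by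
      funext i
      by_cases hij : i = j
      · subst hij; simp [hj]
      · simp [Function.update_of_ne hij, Finset.mem_insert, hij]
    have h2 : Function.update (fun i => if i ∈ S then a + u else x i) j a
        = (fun i => if i ∈ S then a + u else (Function.update x j a) i) := by
      funext i
      by_cases hij : i = j
      · subst hij; simp [hj]
      · simp [Function.update_of_ne hij, hij]
    have h3 : Function.update (fun i => if i ∈ S then a + u else x i) j u
        = (fun i => if i ∈ S then a + u else (Function.update x j u) i) := by
      funext i
      by_cases hij : i = j
      · subst hij; simp [hj]
      · simp [Function.update_of_ne hij, hij]
    rw [h1, hadd, h2, h3, ih, ih, Finset.sum_powerset_insert hj]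
    congr 1
    · apply Finset.sum_congr rfl
      intro T hT
      rw [Finset.mem_powerset] at hT
      have hjT : j ∉ T := fun h => hj (hT h)
      congr 1
      funext i
      by_cases hij : i = j
      · subst hij; simp [hjT, hj, Finset.mem_insert]
      · simp [Function.update_of_ne hij, Finset.mem_insert, hij]
    · apply Finset.sum_congr rfl
      intro T hT
      rw [Finset.mem_powerset] at hT
      have hjT : j ∉ T := fun h => hj (hT h)
      congr 1
      funext i
      by_cases hij : i = j
      · subst hij; simp [hjT, hj, Finset.mem_insert]
      · simp [Function.update_of_ne hij, Finset.mem_insert, hij]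

lemma delta_diag (f : (Fin n → A) → M)
    (hadd : ∀ (i : Fin n) (x : Fin n → A) (a b : A),
      f (Function.update x i (a + b)) = f (Function.update x i a) + f (Function.update x i b))
    (S : Finset (Fin n)) (x : Fin n → A) (u : A) :
    deltaOp u (diagS f S x)
      = fun a => ∑ T ∈ S.powerset.erase ∅,
          diagS f (S \ T) (fun i => if i ∈ T then u else x i) a := by
  funext a
  have hform : ∀ T ∈ S.powerset.erase ∅,
      f (fun i => if i ∈ T then u else if i ∈ S then a else x i)
        = diagS f (S \ T) (fun i => if i ∈ T then u else x i) a := by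
    intro T hT
    have hTS : T ⊆ S := Finset.mem_powerset.mp (Finset.mem_of_mem_erase hT)
    unfold diagS
    congr 1
    funext i
    by_cases hiT : i ∈ T
    · simp [hiT, Finset.mem_sdiff]
    · by_cases hiS : i ∈ S <;> simp [hiT, hiS, Finset.mem_sdiff]
  have hsum := expand f hadd S x a u
  have hsplit : ∑ T ∈ S.powerset, f (fun i => if i ∈ T then u else if i ∈ S then a else x i)
      = (∑ T ∈ S.powerset.erase ∅, f (fun i => if i ∈ T then u else if i ∈ S then a else x i))
        + f (fun i => if i ∈ (∅ : Finset (Fin n)) then u else if i ∈ S then a else x i) :=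
    (Finset.sum_erase_add _ _ (Finset.empty_mem_powerset S)).symm
  have hz : f (fun i => if i ∈ (∅ : Finset (Fin n)) then u else if i ∈ S then a else x i)
      = diagS f S x a := by simp [diagS]
  show diagS f S x (a + u) - diagS f S x a = _
  have hlhs : diagS f S x (a + u)
      = ∑ T ∈ S.powerset, f (fun i => if i ∈ T then u else if i ∈ S then a else x i) := hsum
  rw [hlhs, hsplit, hz, add_sub_cancel_right]
  exact Finset.sum_congr rfl hform

lemma foldr_sum {ι : Type*} (l : List A) (s : Finset ι) (g : ι → A → M) :
    List.foldr deltaOp (fun a => ∑ t ∈ s, g t a) l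
      = fun a => ∑ t ∈ s, List.foldr deltaOp (g t) l a := by
  induction l with
  | nil => rfl
  | cons u l ih =>
    simp only [List.foldr_cons, ih]
    funext a
    simp [deltaOp, Finset.sum_sub_distrib]

lemma Qzero (f : (Fin n → A) → M)
    (hadd : ∀ (i : Fin n) (x : Fin n → A) (a b : A),
      f (Function.update x i (a + b)) = f (Function.update x i a) + f (Function.update x i b))
    (l : List A) :
    ∀ (S : Finset (Fin n)) (x : Fin n → A), S.card < l.length →
      List.foldr deltaOp (diagS f S x) l = fun _ => (0 : M) := by
  induction l using List.reverseRecOn with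
  | nil => intro S x h; simp at h
  | append_singleton l u ih =>
    intro S x h
    rw [List.foldr_append, List.foldr_cons, List.foldr_nil, delta_diag f hadd,
      foldr_sum]
    funext a
    rw [Finset.sum_eq_zero]
    intro T hT
    have hTne : T ≠ ∅ := Finset.ne_of_mem_erase hT
    have hTS : T ⊆ S := Finset.mem_powerset.mp (Finset.mem_of_mem_erase hT)
    have hcard : (S \ T).card < l.length := by
      have h1 : (S \ T).card = S.card - T.card := Finset.card_sdiff_of_subset hTS
      have h2 : 1 ≤ T.card := Finset.card_pos.mpr (Finset.nonempty_of_ne_empty hTne)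
      have h3 : S.card < l.length + 1 := by simpa [List.length_append] using h
      have h4 : T.card ≤ S.card := Finset.card_le_card hTS
      omega
    rw [ih _ _ hcard]

lemma Pmain (f : (Fin n → A) → M)
    (hsym : ∀ (σ : Equiv.Perm (Fin n)) (x : Fin n → A), f (x ∘ σ) = f x)
    (hadd : ∀ (i : Fin n) (x : Fin n → A) (a b : A),
      f (Function.update x i (a + b)) = f (Function.update x i a) + f (Function.update x i b))
    (l : List A) :
    ∀ (S : Finset (Fin n)) (x y : Fin n → A),
      l.length = S.card → (∀ i ∉ S, y i = x i) → S.val.map y = (l : Multiset A) →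
      List.foldr deltaOp (diagS f S x) l = fun _ => S.card.factorial • f y := by
  induction l using List.reverseRecOn with
  | nil =>
    intro S x y hlen hy hm
    have hS : S = ∅ := Finset.card_eq_zero.mp (by simpa using hlen.symm)
    subst hS
    have hyx : y = x := funext fun i => hy i (by simp)
    subst hyx
    funext a
    simp [diagS]
  | append_singleton l u ih =>
    intro S x y hlen hy hm
    have hlen' : l.length + 1 = S.card := by simpa [List.length_append] using hlen
    rw [List.foldr_append, List.foldr_cons, List.foldr_nil, delta_diag f hadd,
      foldr_sum]
    -- find k ∈ S with y k = u
    have hu : u ∈ S.val.map y := by rw [hm]; simp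
    obtain ⟨k, hkS, hky⟩ := Multiset.mem_map.mp hu
    have hkS' : k ∈ S := hkS
    funext a
    show (∑ T ∈ S.powerset.erase ∅,
        List.foldr deltaOp (diagS f (S \ T) (fun i => if i ∈ T then u else x i)) l a)
      = S.card.factorial • f y
    have key : ∀ T ∈ S.powerset.erase ∅,
        List.foldr deltaOp (diagS f (S \ T) (fun i => if i ∈ T then u else x i)) l a
          = if T.card = 1 then (S.card - 1).factorial • f y else 0 := by
      intro T hT
      have hTne : T ≠ ∅ := Finset.ne_of_mem_erase hT
      have hTS : T ⊆ S := Finset.mem_powerset.mp (Finset.mem_of_mem_erase hT)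
      by_cases h1 : T.card = 1
      · obtain ⟨j, rfl⟩ := Finset.card_eq_one.mp h1
        rw [if_pos h1]
        have hjS : j ∈ S := hTS (Finset.mem_singleton_self j)
        set e := Equiv.swap j k with he
        have hcond1 : ∀ i ∉ S \ ({j} : Finset (Fin n)),
            (y ∘ e) i = (fun i => if i ∈ ({j} : Finset (Fin n)) then u else x i) i := by
          intro i hi
          rw [Finset.mem_sdiff] at hi
          push_neg at hi
          by_cases hij : i = j
          · subst hij
            simp [he, Equiv.swap_apply_left, hky]
          · have hiS : i ∉ S := fun h => hij (Finset.mem_singleton.mp (hi h))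
            have hik : i ≠ k := fun h => hiS (h ▸ hkS')
            simp [he, Equiv.swap_apply_of_ne_of_ne hij hik, hy i hiS,
              Finset.mem_singleton, hij]
        have himg : (S.erase j).map e.toEmbedding = S.erase k := by
          ext i
          rw [Finset.mem_map_equiv]
          have hes : e.symm = e := by rw [he]; exact Equiv.symm_swap j k
          rw [hes]
          by_cases hij : i = j
          · subst hij
            simp only [he, Equiv.swap_apply_left, Finset.mem_erase]
            constructor
            · rintro ⟨hkj, hk2⟩; exact ⟨fun h => hkj h.symm, hjS⟩
            · rintro ⟨hjk, _⟩; exact ⟨fun h => hjk h.symm, hkS'⟩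
          · by_cases hik : i = k
            · subst hik
              simp [he, Equiv.swap_apply_right, Finset.mem_erase]
            · simp [he, Equiv.swap_apply_of_ne_of_ne hij hik, Finset.mem_erase, hij, hik]
        have hmul : (S \ ({j} : Finset (Fin n))).val.map (y ∘ e) = (l : Multiset A) := by
          rw [← Finset.erase_eq]
          have h1' : (S.erase j).val.map (y ∘ e) = ((S.erase j).val.map e).map y := by
            rw [Multiset.map_map]
          have h2' : (S.erase j).val.map ⇑e = (S.erase k).val := by
            rw [show (S.erase j).val.map ⇑e = ((S.erase j).map e.toEmbedding).val from rfl, himg]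
          rw [h1', h2']
          -- now (S.erase k).val.map y = ↑l
          have h3' : S.val = k ::ₘ (S.erase k).val := by
            rw [Finset.erase_val]
            exact (Multiset.cons_erase hkS).symm
          have h4' : (u ::ₘ (S.erase k).val.map y : Multiset A) = u ::ₘ (l : Multiset A) := by
            have : S.val.map y = u ::ₘ (l : Multiset A) := by
              rw [hm]
              rw [show ((l ++ [u] : List A) : Multiset A) = u ::ₘ (l : Multiset A) by simp]
            rw [h3', Multiset.map_cons, hky] at this
            exact this
          exact (Multiset.cons_inj_right u).mp h4'
        have hlen2 : l.length = (S \ ({j} : Finset (Fin n))).card := by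
          rw [← Finset.erase_eq, Finset.card_erase_of_mem hjS]
          omega
        have := ih (S \ ({j} : Finset (Fin n))) (fun i => if i ∈ ({j} : Finset (Fin n)) then u else x i)
          (y ∘ e) hlen2 hcond1 hmul
        rw [this]
        have hcard : (S \ ({j} : Finset (Fin n))).card = S.card - 1 := by
          rw [← Finset.erase_eq, Finset.card_erase_of_mem hjS]
        rw [hcard, hsym e y]
      · rw [if_neg h1]
        have h2 : 1 ≤ T.card := Finset.card_pos.mpr (Finset.nonempty_of_ne_empty hTne)
        have h3 : T.card ≤ S.card := Finset.card_le_card hTS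
        have hcard : (S \ T).card < l.length := by
          rw [Finset.card_sdiff_of_subset hTS]; omega
        rw [Qzero f hadd l _ _ hcard]
    rw [Finset.sum_congr rfl key, Finset.sum_ite, Finset.sum_const, Finset.sum_const_zero,
      add_zero]
    have hcount : ((S.powerset.erase ∅).filter (fun T => T.card = 1)).card = S.card := by
      rw [Finset.filter_erase, Finset.erase_eq_of_notMem (by simp),
        ← Finset.powersetCard_eq_filter, Finset.card_powersetCard, Nat.choose_one_right]
    rw [hcount, smul_smul, Nat.mul_factorial_pred (by omega)]

end Aux

theorem stmt3 {A M : Type*} [AddCommSemigroup A] [AddCommGroup M]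
    {n : ℕ} (f : (Fin n → A) → M)
    (hsym : ∀ (σ : Equiv.Perm (Fin n)) (x : Fin n → A), f (x ∘ σ) = f x)
    (hadd : ∀ (i : Fin n) (x : Fin n → A) (a b : A),
      f (Function.update x i (a + b)) = f (Function.update x i a) + f (Function.update x i b))
    (u : Fin n → A) :
    List.foldr deltaOp (fun a => f (fun _ => a)) (List.ofFn u) = fun _ => Nat.factorial n • f u := by
  have hdiag : diagS f Finset.univ u = fun a => f (fun _ => a) := by
    funext a; simp [diagS]
  have h := Pmain f hsym hadd (List.ofFn u) Finset.univ u u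
    (by simp) (fun i hi => absurd (Finset.mem_univ i) hi) (by simp)
  rw [← hdiag, h]
  simp [Finset.card_univ]
end

section
/- Let M be a Hausdorff topological abelian group and f : [0,∞)^n → M a function that in each variable is a continuous additive homomorphism (with respect to addition on [0,∞)). Then for any indices i ≠ j and any a, λ_1, …, λ_n ∈ [0,∞), f(λ_1, …, aλ_i, …, λ_n) = f(λ_1, …, aλ_j, …, λ_n), where the scalar a multiplies the i-th (resp. j-th) coordinate. -/
/-!
Fixing all coordinates but the `i`-th and `j`-th turns `f` into a map `g : ℝ≥0 → ℝ≥0 → M`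
that is additive and continuous in each variable. A natural factor `k` passes from one
argument of `g` to the other, since both sides equal `k • g s t`; clearing denominators
extends this to factors in `ℚ≥0`, and density of `ℚ≥0` in `ℝ≥0` together with continuity and
the Hausdorff property extends it to all of `ℝ≥0`.
-/

open scoped NNReal

open Function

theorem NNRat.denseRange_cast_nnreal : DenseRange ((↑) : ℚ≥0 → ℝ≥0) := by
  refine dense_of_exists_between fun a b hab => ?_
  obtain ⟨q, haq, hqb⟩ := exists_rat_btwn (NNReal.coe_lt_coe.2 hab)
  have hq : 0 ≤ q := by exact_mod_cast a.2.trans haq.le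
  refine ⟨_, ⟨⟨q, hq⟩, rfl⟩, ?_, ?_⟩ <;> rw [← NNReal.coe_lt_coe] <;> simpa

namespace AddMonoidHom

variable {M : Type*} [AddCommMonoid M] (g : ℝ≥0 →+ ℝ≥0 →+ M)

theorem map_natCast_mul_swap (k : ℕ) (s t : ℝ≥0) : g (k * s) t = g s (k * t) := by
  simp only [← nsmul_eq_mul, map_nsmul, nsmul_apply]

theorem map_nnratCast_mul_swap (q : ℚ≥0) (s t : ℝ≥0) : g (q * s) t = g s (q * t) := by
  have hd : (q.den : ℝ≥0) ≠ 0 := by positivity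
  rw [NNRat.cast_def]
  calc g (q.num / q.den * s) t = g (q.num / q.den * s) (q.den * (t / q.den)) := by
        rw [mul_div_cancel₀ t hd]
    _ = g (q.den * (q.num / q.den * s)) (t / q.den) := (g.map_natCast_mul_swap ..).symm
    _ = g (q.num * s) (t / q.den) := by rw [← mul_assoc, mul_div_cancel₀ _ hd]
    _ = g s (q.num * (t / q.den)) := g.map_natCast_mul_swap ..
    _ = g s (q.num / q.den * t) := by rw [mul_div_assoc', div_mul_eq_mul_div]

theorem map_mul_swap_of_continuous [TopologicalSpace M] [T2Space M]
    (hleft : ∀ t, Continuous fun s => g s t) (hright : ∀ s, Continuous (g s)) (a s t : ℝ≥0) :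
    g (a * s) t = g s (a * t) :=
  congrFun (NNRat.denseRange_cast_nnreal.equalizer ((hleft t).comp (continuous_mul_const s))
    ((hright s).comp (continuous_mul_const t)) (funext fun q => g.map_nnratCast_mul_swap q s t)) a

end AddMonoidHom

section BiadditiveSlice

variable {ι M : Type*} [DecidableEq ι] [AddCommGroup M] (f : (ι → ℝ≥0) → M)
  (hadd : ∀ i x a b, f (update x i (a + b)) = f (update x i a) + f (update x i b))
  {i j : ι} (hij : i ≠ j) (x : ι → ℝ≥0)

def biadditiveSlice : ℝ≥0 →+ ℝ≥0 →+ M :=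
  AddMonoidHom.mk' (fun s => AddMonoidHom.mk' (fun t => f (update (update x i s) j t)) (hadd j _))
    fun s s' => AddMonoidHom.ext fun t => by
      simp only [AddMonoidHom.mk'_apply, AddMonoidHom.add_apply, update_comm hij, hadd i]

@[simp]
theorem biadditiveSlice_apply (s t : ℝ≥0) :
    biadditiveSlice f hadd hij x s t = f (update (update x i s) j t) :=
  rfl

end BiadditiveSlice

theorem stmt6_general {M : Type*} [AddCommGroup M] [TopologicalSpace M]
    [T2Space M] {n : ℕ} (f : (Fin n → ℝ≥0) → M)
    (hcont : ∀ (i : Fin n) (x : Fin n → ℝ≥0),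
      Continuous fun t : ℝ≥0 => f (Function.update x i t))
    (hadd : ∀ (i : Fin n) (x : Fin n → ℝ≥0) (a b : ℝ≥0),
      f (Function.update x i (a + b))
        = f (Function.update x i a) + f (Function.update x i b))
    (i j : Fin n) (hij : i ≠ j) (a : ℝ≥0) (lam : Fin n → ℝ≥0) :
    f (Function.update lam i (a * lam i)) = f (Function.update lam j (a * lam j)) := by
  have hswap := (biadditiveSlice f hadd hij lam).map_mul_swap_of_continuous
    (fun t => by simpa only [biadditiveSlice_apply, update_comm hij] using hcont i _)
    (fun s => hcont j _) a (lam i) (lam j)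
  simpa only [biadditiveSlice_apply, update_comm hij, update_eq_self] using hswap

theorem stmt6 {M : Type*} [AddCommGroup M] [TopologicalSpace M] [IsTopologicalAddGroup M]
    [T2Space M] {n : ℕ} (f : (Fin n → ℝ≥0) → M)
    (hcont : ∀ (i : Fin n) (x : Fin n → ℝ≥0),
      Continuous fun t : ℝ≥0 => f (Function.update x i t))
    (hadd : ∀ (i : Fin n) (x : Fin n → ℝ≥0) (a b : ℝ≥0),
      f (Function.update x i (a + b))
        = f (Function.update x i a) + f (Function.update x i b))
    (i j : Fin n) (hij : i ≠ j) (a : ℝ≥0) (lam : Fin n → ℝ≥0) :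
    f (Function.update lam i (a * lam i)) = f (Function.update lam j (a * lam j)) :=
  stmt6_general f hcont hadd i j hij a lam
end

section
/- Let M be an abelian group and suppose f : [0,∞) → M admits two polynomial expansions f(a) = f_0 + f_1(a) + f_2(a²) + ⋯ + f_d(a^d) and f(a) = g_0 + g_1(a) + ⋯ + g_{d}(a^{d}), where f_0, g_0 ∈ M are constants and each f_i, g_i : [0,∞) → M is an additive homomorphism. Then f_0 = g_0 and f_i = g_i for all i = 1, …, d. -/
open scoped NNReal
open Finset

/-!
Subtracting the two expansions leaves additive maps `hᵢ = fᵢ - gᵢ` with `∑ᵢ hᵢ(aⁱ) = 0` for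
all `a` (the constants agree by evaluating at `a = 0`). Comparing the identity at `2a` with
`2^(d+1)` times the identity at `a` kills the top term and multiplies `hᵢ` by the positive
integer `2^(d+1) - 2^i`; additive maps on `ℝ≥0` are divisible, so induction on `d` gives
`hᵢ = 0` for `i ≤ d`. Then `h_{d+1}(a^{d+1}) = 0`, and every `x ≥ 0` is a `(d+1)`-st power.
-/

theorem AddMonoidHom.eq_zero_of_nsmul_eq_zero {K M : Type*} [DivisionSemiring K] [CharZero K]
    [AddCommMonoid M] {h : K →+ M} {c : ℕ} (hc : c ≠ 0) (hch : c • h = 0) : h = 0 := by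
  ext x
  have hx : x = c • ((c : K)⁻¹ * x) := by
    rw [nsmul_eq_mul, ← mul_assoc, mul_inv_cancel₀ (Nat.cast_ne_zero.mpr hc), one_mul]
  rw [hx, map_nsmul, ← AddMonoidHom.nsmul_apply, hch, AddMonoidHom.zero_apply,
    AddMonoidHom.zero_apply]

theorem AddMonoidHom.map_natCast_mul_pow {K M : Type*} [CommSemiring K] [AddCommMonoid M]
    (h : K →+ M) (n i : ℕ) (a : K) : h ((n * a) ^ i) = n ^ i • h (a ^ i) := by
  rw [mul_pow, ← Nat.cast_pow, ← nsmul_eq_mul, map_nsmul]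

theorem sum_pow_sub_pow_smul_apply_pow_eq_zero {K M : Type*} [CommSemiring K]
    [AddCommGroup M] {d : ℕ} (h : ℕ → K →+ M)
    (hsum : ∀ a, ∑ i ∈ Icc 1 (d + 1), h i (a ^ i) = 0) (a : K) :
    ∑ i ∈ Icc 1 d, ((2 ^ (d + 1) - 2 ^ i) • h i) (a ^ i) = 0 := by
  have hterm : ∀ i ∈ Icc 1 (d + 1), ((2 ^ (d + 1) - 2 ^ i) • h i) (a ^ i)
      = 2 ^ (d + 1) • h i (a ^ i) - h i ((2 * a) ^ i) := fun i hi => by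
    have hle : 2 ^ i ≤ 2 ^ (d + 1) := Nat.pow_le_pow_right two_pos (mem_Icc.mp hi).2
    rw [AddMonoidHom.nsmul_apply, sub_nsmul _ hle, ← sub_eq_add_neg,
      show (2 : K) = (2 : ℕ) from Nat.cast_ofNat.symm, (h i).map_natCast_mul_pow]
  have hfull : ∑ i ∈ Icc 1 (d + 1), ((2 ^ (d + 1) - 2 ^ i) • h i) (a ^ i) = 0 := by
    rw [sum_congr rfl hterm, sum_sub_distrib, ← smul_sum, hsum, hsum, smul_zero, sub_zero]
  rwa [sum_Icc_succ_top (by omega), tsub_self, zero_smul, AddMonoidHom.zero_apply,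
    add_zero] at hfull

theorem eq_zero_of_sum_apply_pow_eq_zero {M : Type*} [AddCommGroup M] {d : ℕ}
    (h : ℕ → ℝ≥0 →+ M) (hsum : ∀ a, ∑ i ∈ Icc 1 d, h i (a ^ i) = 0) :
    ∀ i ∈ Icc 1 d, h i = 0 := by
  induction d generalizing h with
  | zero => simp
  | succ d ih =>
    have hlow : ∀ i ∈ Icc 1 d, h i = 0 := fun i hi =>
      (h i).eq_zero_of_nsmul_eq_zero
        (Nat.sub_ne_zero_of_lt (Nat.pow_lt_pow_right one_lt_two (by grind)))
        (ih _ (sum_pow_sub_pow_smul_apply_pow_eq_zero h hsum) i hi)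
    have htop : h (d + 1) = 0 := by
      ext x
      rw [AddMonoidHom.zero_apply, ← NNReal.rpow_inv_natCast_pow x (n := d + 1) (by omega)]
      have hroot := hsum (x ^ ((d + 1 : ℕ)⁻¹ : ℝ))
      rwa [sum_Icc_succ_top (by omega),
        sum_eq_zero fun i hi => by rw [hlow i hi, AddMonoidHom.zero_apply], zero_add] at hroot
    intro i hi
    obtain hi' | rfl : i ∈ Icc 1 d ∨ i = d + 1 := by grind
    exacts [hlow i hi', htop]

theorem stmt9 {M : Type*} [AddCommGroup M] {d : ℕ}
    (f : ℝ≥0 → M) (f0 g0 : M) (F G : ℕ → ℝ≥0 → M)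
    (hFadd : ∀ i ∈ Finset.Icc 1 d, ∀ a b : ℝ≥0, F i (a + b) = F i a + F i b)
    (hGadd : ∀ i ∈ Finset.Icc 1 d, ∀ a b : ℝ≥0, G i (a + b) = G i a + G i b)
    (hF : ∀ a : ℝ≥0, f a = f0 + ∑ i ∈ Finset.Icc 1 d, F i (a ^ i))
    (hG : ∀ a : ℝ≥0, f a = g0 + ∑ i ∈ Finset.Icc 1 d, G i (a ^ i)) :
    f0 = g0 ∧ ∀ i ∈ Finset.Icc 1 d, F i = G i := by
  let H : ℕ → ℝ≥0 →+ M := fun i => if hi : i ∈ Icc 1 d then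
    AddMonoidHom.mk' (F i - G i) fun a b => by simp [hFadd i hi, hGadd i hi]; abel else 0
  have hH : ∀ i ∈ Icc 1 d, ∀ a, H i a = F i a - G i a := fun i hi a => by
    simp only [H, dif_pos hi, AddMonoidHom.mk'_apply, Pi.sub_apply]
  have hdiff : ∀ a, f0 - g0 + ∑ i ∈ Icc 1 d, H i (a ^ i) = 0 := fun a => by
    rw [sum_congr rfl fun i hi => hH i hi _, sum_sub_distrib,
      ← sub_eq_zero.mpr ((hF a).symm.trans (hG a))]
    abel
  have hf0 : f0 = g0 := by
    have hzero : ∑ i ∈ Icc 1 d, H i (0 ^ i) = 0 :=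
      sum_eq_zero fun i hi => by rw [zero_pow (by grind), map_zero]
    simpa [hzero, sub_eq_zero] using hdiff 0
  refine ⟨hf0, fun i hi => funext fun a => ?_⟩
  have hHi := eq_zero_of_sum_apply_pow_eq_zero H (by simpa [hf0] using hdiff) i hi
  simpa [hH i hi, sub_eq_zero] using DFunLike.congr_fun hHi a
end

section
/- Let V be a real vector space, let v_1, …, v_d ∈ V be linearly independent, and for 0 ≤ i ≤ d set σ^i = S(v_1, …, v_i) and τ^{d−i} = S(v_{i+1}, …, v_d), where S(w_1, …, w_k) = { x_1 w_1 + ⋯ + x_k w_k : 1 ≥ x_1 ≥ ⋯ ≥ x_k ≥ 0 }. Fix a, b > 0 and define A_i = a σ^i + b τ^{d−i} + b(v_1 + ⋯ + v_i) for i ≥ 0 (Minkowski sums and translation). Then (a+b) σ^d = A_0 ∪ A_1 ∪ ⋯ ∪ A_d. -/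
open scoped Pointwise

/-- `simplexS w` is the simplex `S(w_1, …, w_k) =
{ x_1 w_1 + ⋯ + x_k w_k : 1 ≥ x_1 ≥ ⋯ ≥ x_k ≥ 0 }`. -/
def simplexS {V : Type*} [AddCommGroup V] [Module ℝ V] {k : ℕ} (w : Fin k → V) : Set V :=
  {y | ∃ x : Fin k → ℝ, (∀ i, 0 ≤ x i) ∧ (∀ i, x i ≤ 1) ∧
    (∀ i j : Fin k, i ≤ j → x j ≤ x i) ∧ y = ∑ i, x i • w i}

/-! In coordinates `z` with respect to `v`, `(a + b) σ^d` is the image of the antitone `z` with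
values in `[0, a + b]`, and `A_i` the image of those with `z_j ≥ b` for `j < i` and `z_j ≤ b` for
`j ≥ i`: subtracting `b` from the first `i` coordinates splits such a `z` into coordinates of a
point of `a σ^i` and of a point of `b τ^{d-i}`. Every antitone `z` is cut in this way at the least
`i` beyond which all its coordinates are `≤ b`. -/

section

variable {V : Type*} [AddCommGroup V] [Module ℝ V]

def antitoneBox (k : ℕ) (c : ℝ) : Set (Fin k → ℝ) :=
  {z | Antitone z ∧ ∀ j, z j ∈ Set.Icc 0 c}

theorem simplexS_eq_image {k : ℕ} (w : Fin k → V) :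
    simplexS w = Fintype.linearCombination ℝ w '' antitoneBox k 1 := by
  ext y
  simp only [simplexS, antitoneBox, Set.mem_ofPred_eq, Set.mem_image, Set.mem_Icc,
    Fintype.linearCombination_apply, forall_and]
  constructor
  · rintro ⟨x, h0, h1, hx, rfl⟩
    exact ⟨x, ⟨fun i j hij => hx i j hij, h0, h1⟩, rfl⟩
  · rintro ⟨x, ⟨hx, h0, h1⟩, rfl⟩
    exact ⟨x, h0, h1, fun i j hij => hx hij, rfl⟩

theorem smul_antitoneBox_one {k : ℕ} {c : ℝ} (hc : 0 < c) :
    c • antitoneBox k 1 = antitoneBox k c := by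
  ext z
  rw [Set.mem_smul_set]
  constructor
  · rintro ⟨x, ⟨hx, hx01⟩, rfl⟩
    refine ⟨fun i j hij => mul_le_mul_of_nonneg_left (hx hij) hc.le, fun j => ?_⟩
    have := hx01 j
    exact ⟨mul_nonneg hc.le this.1, by simpa using mul_le_of_le_one_right hc.le this.2⟩
  · rintro ⟨hz, hz0c⟩
    refine ⟨c⁻¹ • z, ⟨fun i j hij => mul_le_mul_of_nonneg_left (hz hij) (inv_nonneg.2 hc.le),
      fun j => ?_⟩, smul_inv_smul₀ hc.ne' z⟩
    have := hz0c j
    exact ⟨mul_nonneg (inv_nonneg.2 hc.le) this.1, by simpa [inv_mul_le_one₀ hc] using this.2⟩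

theorem smul_simplexS {k : ℕ} (w : Fin k → V) {c : ℝ} (hc : 0 < c) :
    c • simplexS w = Fintype.linearCombination ℝ w '' antitoneBox k c := by
  rw [simplexS_eq_image, ← image_smul_set, smul_antitoneBox_one hc]

theorem Fin.sum_univ_eq_sum_castLE_add_sum_natAdd {M : Type*} [AddCommMonoid M] {d i : ℕ}
    (hi : i ≤ d) (g : Fin d → M) :
    ∑ j, g j = ∑ t : Fin i, g (Fin.castLE hi t) + ∑ t : Fin (d - i), g ⟨i + t, by omega⟩ := by
  rw [← Fintype.sum_equiv (finCongr (show i + (d - i) = d by omega)) (fun j => g (finCongr _ j)) g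
    (fun _ => rfl), Fin.sum_univ_add]
  rfl

theorem sum_filter_val_lt {M : Type*} [AddCommMonoid M] {d i : ℕ} (hi : i ≤ d) (g : Fin d → M) :
    ∑ j ∈ Finset.univ.filter (fun j : Fin d => (j : ℕ) < i), g j =
      ∑ t : Fin i, g (Fin.castLE hi t) := by
  rw [Finset.sum_filter, Fin.sum_univ_eq_sum_castLE_add_sum_natAdd hi]
  simp

def antitoneBoxCut (d : ℕ) (a b : ℝ) (i : ℕ) : Set (Fin d → ℝ) :=
  {z | z ∈ antitoneBox d (a + b) ∧ (∀ j : Fin d, (j : ℕ) < i → b ≤ z j) ∧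
    ∀ j : Fin d, i ≤ (j : ℕ) → z j ≤ b}

theorem antitoneBox_eq_iUnion_antitoneBoxCut (d : ℕ) (a b : ℝ) :
    antitoneBox d (a + b) = ⋃ i : Fin (d + 1), antitoneBoxCut d a b i := by
  refine subset_antisymm (fun z hz => ?_) (Set.iUnion_subset fun i z hz => hz.1)
  classical
  have hex : ∃ n, ∀ j : Fin d, n ≤ (j : ℕ) → z j ≤ b := ⟨d, fun j hj => absurd j.2 (by omega)⟩
  refine Set.mem_iUnion.2 ⟨⟨Nat.find hex, Nat.lt_succ_of_le (Nat.find_min' hex ?_)⟩,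
    hz, fun j hj => ?_, Nat.find_spec hex⟩
  · exact fun j hj => absurd j.2 (by omega)
  · obtain ⟨k, hjk, hk⟩ : ∃ k : Fin d, (j : ℕ) ≤ k ∧ b < z k := by
      simpa using Nat.find_min hex hj
    exact hk.le.trans (hz.1 (Fin.le_def.2 hjk))

theorem mem_antitoneBoxCut_iff {d : ℕ} {a b : ℝ} (ha : 0 ≤ a) (hb : 0 ≤ b) {i : ℕ} (hi : i ≤ d)
    (z : Fin d → ℝ) :
    z ∈ antitoneBoxCut d a b i ↔
      (fun t : Fin i => z (Fin.castLE hi t) - b) ∈ antitoneBox i a ∧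
        (fun t : Fin (d - i) => z ⟨i + t, by omega⟩) ∈ antitoneBox (d - i) b := by
  constructor
  · rintro ⟨⟨hanti, hbox⟩, hlow, hhigh⟩
    refine ⟨⟨fun s t hst => sub_le_sub_right (hanti hst) b, fun t => ?_⟩,
      ⟨fun s t hst => hanti (Fin.mk_le_mk.2 (by simpa using hst)), fun t => ?_⟩⟩
    · exact ⟨sub_nonneg.2 (hlow _ t.2), by linarith [(hbox (Fin.castLE hi t)).2]⟩
    · exact ⟨(hbox _).1, hhigh _ (Nat.le_add_right _ _)⟩
  · rintro ⟨⟨hx, hxbox⟩, ⟨hy, hybox⟩⟩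
    have hlow : ∀ j : Fin d, (h : (j : ℕ) < i) → b ≤ z j ∧ z j ≤ a + b := fun j h => by
      obtain ⟨h0, h1⟩ : 0 ≤ z j - b ∧ z j - b ≤ a := hxbox ⟨j, h⟩
      constructor <;> linarith
    have hhigh : ∀ j : Fin d, (h : i ≤ (j : ℕ)) → 0 ≤ z j ∧ z j ≤ b := fun j h => by
      have := hybox ⟨j - i, by omega⟩
      simp only [Nat.add_sub_cancel' h] at this
      exact this
    refine ⟨⟨fun j k hjk => ?_, fun j => ?_⟩, fun j h => (hlow j h).1, fun j h => (hhigh j h).2⟩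
    · rcases lt_or_ge (k : ℕ) i with hk | hk
      · have := hx (show (⟨j, by omega⟩ : Fin i) ≤ ⟨k, hk⟩ from hjk)
        simpa using this
      rcases lt_or_ge (j : ℕ) i with hj | hj
      · exact (hhigh k hk).2.trans (hlow j hj).1
      · have := hy (show (⟨j - i, by omega⟩ : Fin (d - i)) ≤ ⟨k - i, by omega⟩ from
          Fin.mk_le_mk.2 (by simp only [Fin.le_def] at hjk; omega))
        simpa only [Nat.add_sub_cancel' hj, Nat.add_sub_cancel' hk] using this
    · rcases lt_or_ge (j : ℕ) i with h | h
      · exact ⟨hb.trans (hlow j h).1, (hlow j h).2⟩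
      · exact ⟨(hhigh j h).1, (hhigh j h).2.trans (by linarith)⟩

theorem linearCombination_eq_add_add {d i : ℕ} (hi : i ≤ d) (v : Fin d → V) (b : ℝ)
    (z : Fin d → ℝ) :
    Fintype.linearCombination ℝ v z =
      Fintype.linearCombination ℝ (fun t : Fin i => v (Fin.castLE hi t))
          (fun t => z (Fin.castLE hi t) - b) +
        Fintype.linearCombination ℝ (fun t : Fin (d - i) => v ⟨i + t, by omega⟩)
          (fun t => z ⟨i + t, by omega⟩) +
        b • ∑ j ∈ Finset.univ.filter (fun j : Fin d => (j : ℕ) < i), v j := by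
  simp only [Fintype.linearCombination_apply, sum_filter_val_lt hi, Finset.smul_sum, sub_smul,
    Finset.sum_sub_distrib]
  rw [Fin.sum_univ_eq_sum_castLE_add_sum_natAdd hi]
  abel

def glueCoeffs {d i : ℕ} (b : ℝ) (x : Fin i → ℝ) (y : Fin (d - i) → ℝ) : Fin d → ℝ :=
  fun j => if h : (j : ℕ) < i then x ⟨j, h⟩ + b else y ⟨j - i, by omega⟩

@[simp]
theorem glueCoeffs_castLE {d i : ℕ} (hi : i ≤ d) (b : ℝ) (x : Fin i → ℝ) (y : Fin (d - i) → ℝ)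
    (t : Fin i) : glueCoeffs b x y (Fin.castLE hi t) = x t + b := by
  simp [glueCoeffs]

@[simp]
theorem glueCoeffs_mk_add {d i : ℕ} (b : ℝ) (x : Fin i → ℝ) (y : Fin (d - i) → ℝ)
    (t : Fin (d - i)) (h : i + t < d) : glueCoeffs b x y ⟨i + t, h⟩ = y t := by
  simp [glueCoeffs]

theorem smul_simplexS_add_smul_simplexS_add_singleton {d : ℕ} (v : Fin d → V) {a b : ℝ}
    (ha : 0 < a) (hb : 0 < b) {i : ℕ} (hi : i ≤ d) :
    a • simplexS (fun t : Fin i => v (Fin.castLE hi t)) +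
        b • simplexS (fun t : Fin (d - i) => v ⟨i + t, by omega⟩) +
        ({b • ∑ j ∈ Finset.univ.filter (fun j : Fin d => (j : ℕ) < i), v j} : Set V) =
      Fintype.linearCombination ℝ v '' antitoneBoxCut d a b i := by
  rw [smul_simplexS _ ha, smul_simplexS _ hb]
  ext y
  simp only [Set.mem_add, Set.mem_image, Set.mem_singleton_iff]
  constructor
  · rintro ⟨_, ⟨_, ⟨x, hx, rfl⟩, _, ⟨y', hy', rfl⟩, rfl⟩, _, rfl, rfl⟩
    refine ⟨glueCoeffs b x y', (mem_antitoneBoxCut_iff ha.le hb.le hi _).2 ?_, ?_⟩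
    · simpa using ⟨hx, hy'⟩
    · simp [linearCombination_eq_add_add hi v b]
  · rintro ⟨z, hz, rfl⟩
    rw [mem_antitoneBoxCut_iff ha.le hb.le hi] at hz
    exact ⟨_, ⟨_, ⟨_, hz.1, rfl⟩, _, ⟨_, hz.2, rfl⟩, rfl⟩, _, rfl,
      (linearCombination_eq_add_add hi v b z).symm⟩

end

theorem stmt12 {V : Type*} [AddCommGroup V] [Module ℝ V] {d : ℕ}
    (v : Fin d → V) (a b : ℝ) (ha : 0 < a) (hb : 0 < b)
    -- `σ i = S(v_1, …, v_i)`: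
    (σ : Fin (d + 1) → Set V)
    (hσ : ∀ i, σ i = simplexS (fun t : Fin i.1 => v (Fin.castLE i.is_le t)))
    -- `τ i = S(v_{i+1}, …, v_d)`:
    (τ : Fin (d + 1) → Set V)
    (hτ : ∀ i, τ i = simplexS (fun t : Fin (d - i.1) => v ⟨i.1 + t.1, by omega⟩))
    -- `A i = a σ^i + b τ^{d-i} + b(v_1 + ⋯ + v_i)`:
    (A : Fin (d + 1) → Set V)
    (hA : ∀ i, A i = a • σ i + b • τ i
      + ({b • ∑ j ∈ Finset.univ.filter (fun j : Fin d => (j : ℕ) < i.1), v j} : Set V)) :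
    (a + b) • simplexS v = ⋃ i : Fin (d + 1), A i := by
  simp only [hA, hσ, hτ, smul_simplexS_add_smul_simplexS_add_singleton v ha hb,
    smul_simplexS v (add_pos ha hb), ← Set.image_iUnion, antitoneBox_eq_iUnion_antitoneBoxCut]
end

section
/- Let M be a Hausdorff topological abelian group and let ρ : [0,∞) × M → M be a map such that ρ(λ+μ, x) = ρ(λ, x) + ρ(μ, x), ρ(λ, x+y) = ρ(λ, x) + ρ(λ, y), ρ(λ, ρ(μ, x)) = ρ(λμ, x), and ρ(1, x) = x for all λ, μ ∈ [0,∞), x, y ∈ M, and suppose ρ is continuous. Then the map ⋆ : ℝ × M → M defined by λ ⋆ x = ρ(λ, x) for λ ≥ 0 and λ ⋆ x = −ρ(−λ, x) for λ ≤ 0 is continuous and makes M a topological vector space over ℝ (extending its given topological abelian group structure). -/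
open scoped NNReal

/-- The extension of a non-negative scaling map `ρ` to real scalars:
`lam ⋆ x = ρ(lam, x)` for `lam ≥ 0` and `lam ⋆ x = -ρ(-lam, x)` for `lam ≤ 0`. -/
noncomputable def starMap {M : Type*} [Neg M] (ρ : ℝ≥0 × M → M) : ℝ × M → M :=
  fun p => if 0 ≤ p.1 then ρ (Real.toNNReal p.1, p.2) else -ρ (Real.toNNReal (-p.1), p.2)

/-!
With `a⁺ = max a 0` and `a⁻ = max (-a) 0`, the extended action is `a ⋆ x = ρ(a⁺, x) - ρ(a⁻, x)`
(using `ρ(0, x) = 0`), hence continuous as a difference of continuous maps. Additivity of `ρ` in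
the scalar shows that `ρ(p, x) - ρ(q, x)` depends only on `p - q` for `p, q ≥ 0`, so each module
axiom for `⋆` follows by writing the real scalars as differences of non-negative ones and
expanding with the axioms for `ρ`.
-/

lemma Real.coe_toNNReal_sub_coe_toNNReal_neg (a : ℝ) :
    (a.toNNReal : ℝ) - (-a).toNNReal = a := by
  simp only [Real.coe_toNNReal', max_zero_sub_max_neg_zero_eq_self]

lemma Real.exists_eq_coe_sub_coe (a : ℝ) : ∃ p q : ℝ≥0, a = p - q :=
  ⟨_, _, (Real.coe_toNNReal_sub_coe_toNNReal_neg a).symm⟩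

lemma map_zero_left_of_add {M : Type*} [AddCommGroup M] {ρ : ℝ≥0 × M → M}
    (h1 : ∀ (lam mu : ℝ≥0) (x : M), ρ (lam + mu, x) = ρ (lam, x) + ρ (mu, x)) (x : M) :
    ρ (0, x) = 0 := by
  simpa using h1 0 0 x

namespace starMap

variable {M : Type*} [AddCommGroup M] {ρ : ℝ≥0 × M → M}

lemma apply_eq_sub (h0 : ∀ x : M, ρ (0, x) = 0) (a : ℝ) (x : M) :
    starMap ρ (a, x) = ρ (a.toNNReal, x) - ρ ((-a).toNNReal, x) := by
  rcases le_or_gt 0 a with ha | ha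
  · simp [starMap, ha, Real.toNNReal_of_nonpos (neg_nonpos.mpr ha), h0]
  · simp [starMap, ha.not_ge, Real.toNNReal_of_nonpos ha.le, h0]

lemma coe_sub_coe
    (h1 : ∀ (lam mu : ℝ≥0) (x : M), ρ (lam + mu, x) = ρ (lam, x) + ρ (mu, x))
    (p q : ℝ≥0) (x : M) : starMap ρ ((p : ℝ) - q, x) = ρ (p, x) - ρ (q, x) := by
  set a : ℝ := p - q
  have hpq : a.toNNReal + q = p + (-a).toNNReal := by
    ext; push_cast; linarith [Real.coe_toNNReal_sub_coe_toNNReal_neg a]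
  rw [apply_eq_sub (map_zero_left_of_add h1), sub_eq_sub_iff_add_eq_add, ← h1, ← h1, hpq]

lemma add_smul
    (h1 : ∀ (lam mu : ℝ≥0) (x : M), ρ (lam + mu, x) = ρ (lam, x) + ρ (mu, x))
    (a b : ℝ) (x : M) : starMap ρ (a + b, x) = starMap ρ (a, x) + starMap ρ (b, x) := by
  obtain ⟨p, q, rfl⟩ := Real.exists_eq_coe_sub_coe a
  obtain ⟨p', q', rfl⟩ := Real.exists_eq_coe_sub_coe b
  have hsum : (p : ℝ) - q + (p' - q') = ↑(p + p') - ↑(q + q') := by push_cast; ring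
  rw [hsum, coe_sub_coe h1, coe_sub_coe h1, coe_sub_coe h1, h1, h1]
  abel

lemma smul_add (h2 : ∀ (lam : ℝ≥0) (x y : M), ρ (lam, x + y) = ρ (lam, x) + ρ (lam, y))
    (a : ℝ) (x y : M) : starMap ρ (a, x + y) = starMap ρ (a, x) + starMap ρ (a, y) := by
  unfold starMap
  split_ifs
  · exact h2 _ x y
  · rw [h2, neg_add]

lemma smul_smul
    (h1 : ∀ (lam mu : ℝ≥0) (x : M), ρ (lam + mu, x) = ρ (lam, x) + ρ (mu, x))
    (h2 : ∀ (lam : ℝ≥0) (x y : M), ρ (lam, x + y) = ρ (lam, x) + ρ (lam, y))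
    (h3 : ∀ (lam mu : ℝ≥0) (x : M), ρ (lam, ρ (mu, x)) = ρ (lam * mu, x))
    (a b : ℝ) (x : M) : starMap ρ (a, starMap ρ (b, x)) = starMap ρ (a * b, x) := by
  obtain ⟨p, q, rfl⟩ := Real.exists_eq_coe_sub_coe a
  obtain ⟨p', q', rfl⟩ := Real.exists_eq_coe_sub_coe b
  have hprod : ((p : ℝ) - q) * (p' - q') = ↑(p * p' + q * q') - ↑(p * q' + q * p') := by
    push_cast; ring
  have hsub (lam : ℝ≥0) (y z : M) : ρ (lam, y - z) = ρ (lam, y) - ρ (lam, z) :=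
    map_sub (AddMonoidHom.mk' (fun y => ρ (lam, y)) (h2 lam)) y z
  rw [hprod, coe_sub_coe h1, coe_sub_coe h1, coe_sub_coe h1, hsub, hsub, h3, h3, h3, h3,
    h1, h1]
  abel

lemma one_smul (h4 : ∀ x : M, ρ (1, x) = x) (x : M) : starMap ρ (1, x) = x := by
  simp [starMap, h4]

lemma continuous [TopologicalSpace M] [IsTopologicalAddGroup M] (hcont : Continuous ρ)
    (h0 : ∀ x : M, ρ (0, x) = 0) : Continuous (starMap ρ) := by
  rw [show starMap ρ = _ from funext fun p : ℝ × M => apply_eq_sub h0 p.1 p.2]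
  have := continuous_real_toNNReal
  fun_prop

end starMap

theorem stmt18_general {M : Type*} [AddCommGroup M] [TopologicalSpace M] [IsTopologicalAddGroup M]
    (ρ : ℝ≥0 × M → M) (hcont : Continuous ρ)
    (h1 : ∀ (lam mu : ℝ≥0) (x : M), ρ (lam + mu, x) = ρ (lam, x) + ρ (mu, x))
    (h2 : ∀ (lam : ℝ≥0) (x y : M), ρ (lam, x + y) = ρ (lam, x) + ρ (lam, y))
    (h3 : ∀ (lam mu : ℝ≥0) (x : M), ρ (lam, ρ (mu, x)) = ρ (lam * mu, x))
    (h4 : ∀ x : M, ρ (1, x) = x) :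
    Continuous (starMap ρ) ∧
    (∀ (a b : ℝ) (x : M), starMap ρ (a + b, x) = starMap ρ (a, x) + starMap ρ (b, x)) ∧
    (∀ (a : ℝ) (x y : M), starMap ρ (a, x + y) = starMap ρ (a, x) + starMap ρ (a, y)) ∧
    (∀ (a b : ℝ) (x : M), starMap ρ (a, starMap ρ (b, x)) = starMap ρ (a * b, x)) ∧
    ∀ x : M, starMap ρ (1, x) = x :=
  ⟨starMap.continuous hcont (map_zero_left_of_add h1), starMap.add_smul h1,
    starMap.smul_add h2, starMap.smul_smul h1 h2 h3, starMap.one_smul h4⟩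

theorem stmt18 {M : Type*} [AddCommGroup M] [TopologicalSpace M] [IsTopologicalAddGroup M]
    [T2Space M]
    (ρ : ℝ≥0 × M → M) (hcont : Continuous ρ)
    (h1 : ∀ (lam mu : ℝ≥0) (x : M), ρ (lam + mu, x) = ρ (lam, x) + ρ (mu, x))
    (h2 : ∀ (lam : ℝ≥0) (x y : M), ρ (lam, x + y) = ρ (lam, x) + ρ (lam, y))
    (h3 : ∀ (lam mu : ℝ≥0) (x : M), ρ (lam, ρ (mu, x)) = ρ (lam * mu, x))
    (h4 : ∀ x : M, ρ (1, x) = x) :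
    Continuous (starMap ρ) ∧
    (∀ (a b : ℝ) (x : M), starMap ρ (a + b, x) = starMap ρ (a, x) + starMap ρ (b, x)) ∧
    (∀ (a : ℝ) (x y : M), starMap ρ (a, x + y) = starMap ρ (a, x) + starMap ρ (a, y)) ∧
    (∀ (a b : ℝ) (x : M), starMap ρ (a, starMap ρ (b, x)) = starMap ρ (a * b, x)) ∧
    ∀ x : M, starMap ρ (1, x) = x :=
  stmt18_general ρ hcont h1 h2 h3 h4
end

section
/- Let M be an abelian group, n ≥ 1, and f : [0,∞) → M a function with Δ_{u_1} ⋯ Δ_{u_{n+1}} f = 0 for all u_1, …, u_{n+1} ∈ [0,∞). Define h : [0,∞)^n → M by h(u_1, …, u_n) = (Δ_{u_1} ⋯ Δ_{u_n} f)(a) for any a (this is independent of a). Then h is symmetric and is an additive homomorphism in each of its n variables. -/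
/-!
Since the `Δ_u` commute, the iterated difference `Δ_{u_1} ⋯ Δ_{u_n} f` depends only on the
multiset of the `u_i`, which gives symmetry, and it suffices to prove additivity in the first
variable. Writing `g = Δ_{u_2} ⋯ Δ_{u_n} f`, the hypothesis says that `Δ_a Δ_b g = 0`, i.e. that
`Δ_b g` is constant; additivity then follows from `Δ_{a+b} g x = Δ_a g x + Δ_b g (x + a)`.
Constancy of `Δ_{u_1} ⋯ Δ_{u_n} f` is `Δ_a Δ_{u_1} ⋯ Δ_{u_n} f = 0` evaluated at `0`.
-/

open scoped NNReal

theorem List.ofFn_update {α : Type*} {n : ℕ} (u : Fin n → α) (i : Fin n) (x : α) :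
    List.ofFn (Function.update u i x) = (List.ofFn u).set i x := by
  refine List.ext_getElem (by simp) fun j hj _ => ?_
  simp [Function.update, List.getElem_set, Fin.ext_iff, eq_comm]

namespace deltaOp

variable {A M : Type*} [AddCommMonoid A] [AddCommGroup M]

theorem comm (u v : A) (f : A → M) : deltaOp u (deltaOp v f) = deltaOp v (deltaOp u f) := by
  funext a
  simp only [deltaOp, add_right_comm a v u]
  abel

instance : LeftCommutative (deltaOp : A → (A → M) → A → M) := ⟨comm⟩

theorem foldr_perm {l l' : List A} (hl : l.Perm l') (f : A → M) :
    l.foldr deltaOp f = l'.foldr deltaOp f :=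
  hl.foldr_eq f

theorem foldr_set {l : List A} {i : ℕ} (hi : i < l.length) (x : A) (f : A → M) :
    (l.set i x).foldr deltaOp f = deltaOp x ((l.eraseIdx i).foldr deltaOp f) :=
  foldr_perm (List.set_perm_cons_eraseIdx hi x) f

theorem apply_eq_apply_zero_of_deltaOp_eq_zero {g : A → M} {a : A} (h : deltaOp a g = 0) :
    g a = g 0 := by
  simpa [deltaOp, sub_eq_zero] using congrFun h 0

theorem add_apply (a b : A) (g : A → M) (x : A) :
    deltaOp (a + b) g x = deltaOp a g x + deltaOp b g (x + a) := by
  simp only [deltaOp, add_assoc]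
  abel

theorem add_apply_of_deltaOp_deltaOp_eq_zero {a b : A} {g : A → M}
    (h : deltaOp a (deltaOp b g) = 0) (x : A) :
    deltaOp (a + b) g x = deltaOp a g x + deltaOp b g x := by
  rw [add_apply, ← sub_eq_zero.mp (congrFun h x)]

end deltaOp

theorem stmt19_general {M : Type*} [AddCommGroup M] {n : ℕ}
    (f : ℝ≥0 → M)
    (hf : ∀ u : Fin (n + 1) → ℝ≥0, List.foldr deltaOp f (List.ofFn u) = 0)
    -- `h u = Δ_{u_1} ⋯ Δ_{u_n} f`, a constant, here read off at `0`:
    (h : (Fin n → ℝ≥0) → M)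
    (hh : ∀ u : Fin n → ℝ≥0, h u = List.foldr deltaOp f (List.ofFn u) 0) :
    -- the iterated difference is indeed independent of the point of evaluation:
    (∀ (u : Fin n → ℝ≥0) (a : ℝ≥0), List.foldr deltaOp f (List.ofFn u) a = h u) ∧
    -- h is symmetric:
    (∀ (σ : Equiv.Perm (Fin n)) (u : Fin n → ℝ≥0), h (u ∘ σ) = h u) ∧
    -- h is an additive homomorphism in each variable:
    ∀ (i : Fin n) (u : Fin n → ℝ≥0) (a b : ℝ≥0),
      h (Function.update u i (a + b))
        = h (Function.update u i a) + h (Function.update u i b) := by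
  have hf_list (l : List ℝ≥0) (hl : l.length = n + 1) : l.foldr deltaOp f = 0 := by
    rw [← List.ofFn_get l, List.ofFn_congr hl]
    exact hf _
  refine ⟨fun u a => ?_, fun σ u => ?_, fun i u a b => ?_⟩
  · rw [hh]
    exact deltaOp.apply_eq_apply_zero_of_deltaOp_eq_zero (hf_list (a :: List.ofFn u) (by simp))
  · rw [hh, hh, deltaOp.foldr_perm (σ.ofFn_comp_perm u)]
  · have hi : (i : ℕ) < (List.ofFn u).length := by simp
    simp only [hh, List.ofFn_update, deltaOp.foldr_set hi]
    refine deltaOp.add_apply_of_deltaOp_deltaOp_eq_zero (hf_list (a :: b :: _) ?_) 0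
    simp only [List.length_cons, List.length_eraseIdx_of_lt hi, List.length_ofFn]
    omega

theorem stmt19 {M : Type*} [AddCommGroup M] {n : ℕ} (hn : 1 ≤ n)
    (f : ℝ≥0 → M)
    (hf : ∀ u : Fin (n + 1) → ℝ≥0, List.foldr deltaOp f (List.ofFn u) = 0)
    -- `h u = Δ_{u_1} ⋯ Δ_{u_n} f`, a constant, here read off at `0`:
    (h : (Fin n → ℝ≥0) → M)
    (hh : ∀ u : Fin n → ℝ≥0, h u = List.foldr deltaOp f (List.ofFn u) 0) :
    -- the iterated difference is indeed independent of the point of evaluation: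
    (∀ (u : Fin n → ℝ≥0) (a : ℝ≥0), List.foldr deltaOp f (List.ofFn u) a = h u) ∧
    -- h is symmetric:
    (∀ (σ : Equiv.Perm (Fin n)) (u : Fin n → ℝ≥0), h (u ∘ σ) = h u) ∧
    -- h is an additive homomorphism in each variable:
    ∀ (i : Fin n) (u : Fin n → ℝ≥0) (a b : ℝ≥0),
      h (Function.update u i (a + b))
        = h (Function.update u i a) + h (Function.update u i b) :=
  stmt19_general f hf h hh
end
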